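/- arXiv:1512.00119 — 2 statements merged into one kernel-verified Lean document; each statement's English description precedes it below -/
import Mathlib

section
/- Let c > 0, p ∈ (0,1), T > 0, and let g : ℝ → ℝ be differentiable on [0,T] with g(0) = p, 0 < g(t) < 1 for all t ∈ [0,T], and g'(t) ≥ c·g(t)·(1 − g(t)) for all t ∈ [0,T]. Then for every t ∈ [0,T], g(t) ≥ p·e^{ct}/(1 − p + p·e^{ct}). -/
/-!
Along a supersolution with values in `(0, 1)`, the logit `log (g / (1 - g))` has derivative
`g' / (g (1 - g)) ≥ c`, so `logit (g t) - c t` is nondecreasing and `logit (g t) ≥ logit p + c t`.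
Applying the increasing sigmoid, the inverse of the logit, gives `g t ≥ sigmoid (c t + logit p)`,
which is the logistic function in the statement.
-/

open Real Set

noncomputable def logit (x : ℝ) : ℝ := log x - log (1 - x)

lemma sigmoid_logit {x : ℝ} (hx₀ : 0 < x) (hx₁ : x < 1) : sigmoid (logit x) = x := by
  have : 0 < 1 - x := sub_pos.2 hx₁
  rw [sigmoid_def, logit, neg_sub, exp_sub, exp_log hx₀, exp_log this]
  field_simp
  ring

lemma sigmoid_add_logit {p : ℝ} (hp₀ : 0 < p) (hp₁ : p < 1) (y : ℝ) :
    sigmoid (y + logit p) = p * exp y / (1 - p + p * exp y) := by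
  have : 0 < 1 - p := sub_pos.2 hp₁
  rw [sigmoid_def, logit, neg_add, neg_sub, exp_add, exp_sub, exp_log hp₀, exp_log this, exp_neg]
  field_simp
  ring

lemma HasDerivAt.logit {g : ℝ → ℝ} {g' t : ℝ} (hg : HasDerivAt g g' t) (h₀ : 0 < g t)
    (h₁ : g t < 1) : HasDerivAt (fun s ↦ logit (g s)) (g' / (g t * (1 - g t))) t := by
  have h₁' : 0 < 1 - g t := sub_pos.2 h₁
  refine ((hg.log h₀.ne').sub ((hg.const_sub 1).log h₁'.ne')).congr_deriv ?_
  field_simp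
  ring

lemma monotoneOn_logit_sub_mul_of_le_deriv {D : Set ℝ} (hD : Convex ℝ D) {c : ℝ} {g g' : ℝ → ℝ}
    (hderiv : ∀ t ∈ D, HasDerivAt g (g' t) t) (hg : ∀ t ∈ D, 0 < g t ∧ g t < 1)
    (hge : ∀ t ∈ D, c * g t * (1 - g t) ≤ g' t) :
    MonotoneOn (fun t ↦ logit (g t) - c * t) D := by
  have hlogit : ∀ t ∈ D,
      HasDerivAt (fun s ↦ logit (g s) - c * s) (g' t / (g t * (1 - g t)) - c) t := fun t ht ↦
    ((hderiv t ht).logit (hg t ht).1 (hg t ht).2).sub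
      (by simpa using (hasDerivAt_id t).const_mul c)
  refine monotoneOn_of_hasDerivWithinAt_nonneg hD
    (fun t ht ↦ (hlogit t ht).continuousAt.continuousWithinAt)
    (fun t ht ↦ (hlogit t (interior_subset ht)).hasDerivWithinAt) fun t ht ↦ ?_
  have ht := interior_subset ht
  obtain ⟨h₀, h₁⟩ := hg t ht
  rw [sub_nonneg, le_div_iff₀ (mul_pos h₀ (sub_pos.2 h₁)), ← mul_assoc]
  exact hge t ht

theorem stmt_6_general (c p T : ℝ)
    (g g' : ℝ → ℝ)
    (hderiv : ∀ t ∈ Set.Icc (0 : ℝ) T, HasDerivAt g (g' t) t)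
    (hg0 : g 0 = p)
    (hg01 : ∀ t ∈ Set.Icc (0 : ℝ) T, 0 < g t ∧ g t < 1)
    (hge : ∀ t ∈ Set.Icc (0 : ℝ) T, c * g t * (1 - g t) ≤ g' t) :
    ∀ t ∈ Set.Icc (0 : ℝ) T,
      p * Real.exp (c * t) / (1 - p + p * Real.exp (c * t)) ≤ g t := by
  intro t ht
  have h0 : (0 : ℝ) ∈ Icc 0 T := ⟨le_rfl, ht.1.trans ht.2⟩
  obtain ⟨hp₀, hp₁⟩ := hg0 ▸ hg01 0 h0
  have hmono := monotoneOn_logit_sub_mul_of_le_deriv (convex_Icc 0 T) hderiv hg01 hge h0 ht ht.1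
  simp only [hg0, mul_zero, sub_zero] at hmono
  rw [← sigmoid_add_logit hp₀ hp₁, ← sigmoid_logit (hg01 t ht).1 (hg01 t ht).2]
  exact sigmoid_le (by linarith)

/-- Lower bound step (3.13)-(3.14): any supersolution of the logistic equation
`g' ≥ c g (1-g)` on `[0,T]` with `g(0) = p ∈ (0,1)` and `0 < g < 1` dominates the
logistic function `p e^{ct} / (1 - p + p e^{ct})` on `[0,T]`. -/
theorem stmt_6 (c p T : ℝ) (hc : 0 < c) (hp : 0 < p) (hp1 : p < 1) (hT : 0 < T)
    (g g' : ℝ → ℝ)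
    (hderiv : ∀ t ∈ Set.Icc (0 : ℝ) T, HasDerivAt g (g' t) t)
    (hg0 : g 0 = p)
    (hg01 : ∀ t ∈ Set.Icc (0 : ℝ) T, 0 < g t ∧ g t < 1)
    (hge : ∀ t ∈ Set.Icc (0 : ℝ) T, c * g t * (1 - g t) ≤ g' t) :
    ∀ t ∈ Set.Icc (0 : ℝ) T,
      p * Real.exp (c * t) / (1 - p + p * Real.exp (c * t)) ≤ g t :=
  stmt_6_general c p T g g' hderiv hg0 hg01 hge
end

section
/- Let G be a simple graph on a vertex type V, let x ∈ V have a finite neighborhood of cardinality N+1, and let λ ≥ 1. For configurations η, ζ : V → Bool with ζ(z) ≤ η(z) for all z ∈ V (where false < true), define the bias voter flip rate at x (with θ = 1) by c(x,η) = (λ/(N+1))·#{y ∼ x : η(y) = 1} if η(x) = 0, and c(x,η) = (1/(N+1))·#{y ∼ x : η(y) = 0} if η(x) = 1; define the contact process flip rate at x by c₁(x,ζ) = (λ/(N+1))·#{y ∼ x : ζ(y) = 1} if ζ(x) = 0, and c₁(x,ζ) = 1 if ζ(x) = 1. Then: (i) if η(x) = ζ(x) = 0, c(x,η) ≥ c₁(x,ζ);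 and (ii) if η(x) = ζ(x) = 1, c(x,η) ≤ c₁(x,ζ). -/
open Finset

/-- The flip rate at `x` of the bias voter model with parameters `λ` and `θ = 1` on a graph
where `x` has `N+1` neighbors: a vertex in state `0` flips at rate
`(λ/(N+1)) ⬝ #{y ∼ x : η(y) = 1}`, a vertex in state `1` flips at rate
`(1/(N+1)) ⬝ #{y ∼ x : η(y) = 0}`. -/
noncomputable def biasVoterRate {V : Type*} (G : SimpleGraph V) (x : V)
    [Fintype (G.neighborSet x)] (lam : ℝ) (N : ℕ) (η : V → Bool) : ℝ :=
  if η x = false then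
    (lam / (N + 1)) * ((G.neighborFinset x).filter (fun y => η y = true)).card
  else
    (1 / (N + 1)) * ((G.neighborFinset x).filter (fun y => η y = false)).card

/-- The flip rate at `x` of the contact process with infection rate `λ/(N+1)` and recovery
rate `1`: a vertex in state `0` becomes infected at rate `(λ/(N+1)) ⬝ #{y ∼ x : ζ(y) = 1}`,
a vertex in state `1` recovers at rate `1`. -/
noncomputable def contactRate {V : Type*} (G : SimpleGraph V) (x : V)
    [Fintype (G.neighborSet x)] (lam : ℝ) (N : ℕ) (ζ : V → Bool) : ℝ :=
  if ζ x = false then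
    (lam / (N + 1)) * ((G.neighborFinset x).filter (fun y => ζ y = true)).card
  else 1

/-- Inequality (4.3) in the proof of Lemma 4.1: for configurations `ζ ≤ η` and `λ ≥ 1`,
at a vertex `x` with `N+1` neighbors, (i) if `η(x) = ζ(x) = 0` then the bias voter rate for
`η` dominates the contact rate for `ζ`, and (ii) if `η(x) = ζ(x) = 1` then the bias voter
rate for `η` is dominated by the contact rate for `ζ`. -/
theorem stmt_13 {V : Type*} (G : SimpleGraph V) (x : V) [Fintype (G.neighborSet x)]
    (lam : ℝ) (hlam : 1 ≤ lam) (N : ℕ)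
    (hcard : (G.neighborFinset x).card = N + 1)
    (η ζ : V → Bool) (hle : ∀ z : V, ζ z ≤ η z) :
    (η x = false → ζ x = false → contactRate G x lam N ζ ≤ biasVoterRate G x lam N η) ∧
    (η x = true → ζ x = true → biasVoterRate G x lam N η ≤ contactRate G x lam N ζ) := by
  have hpos : (0:ℝ) < N + 1 := by positivity
  constructor
  · intro hη hζ
    rw [contactRate, biasVoterRate, if_pos hζ, if_pos hη]
    apply mul_le_mul_of_nonneg_left _ (by positivity)
    have : ((G.neighborFinset x).filter (fun y => ζ y = true)) ⊆
        ((G.neighborFinset x).filter (fun y => η y = true)) := by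
      intro y hy
      simp only [Finset.mem_filter] at hy ⊢
      refine ⟨hy.1, ?_⟩
      cases h : η y
      · have := hle y; rw [hy.2, h] at this; exact absurd this (by simp)
      · rfl
    exact_mod_cast Nat.cast_le.mpr (Finset.card_le_card this)
  · intro hη hζ
    rw [contactRate, biasVoterRate, hη, hζ]
    simp only [Bool.true_eq_false, if_false]
    have hc : (((G.neighborFinset x).filter (fun y => η y = false)).card : ℝ) ≤ N + 1 := by
      have := Finset.card_filter_le (G.neighborFinset x) (fun y => η y = false)
      rw [hcard] at this
      exact_mod_cast this
    calc (1 / (N + 1 : ℝ)) * _ ≤ (1 / (N + 1 : ℝ)) * (N + 1) :=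
          mul_le_mul_of_nonneg_left hc (by positivity)
      _ = 1 := by field_simp
end
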